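/- arXiv:math/0012228 — 3 statements merged into one kernel-verified Lean document; each statement's English description precedes it below -/
import Mathlib

section
/- Let M be a k[[ε]]-module that is Hausdorff (⋂ⱼ εʲM = 0), complete in the ε-adic topology, and ε-torsion free. Then M is isomorphic as a k[[ε]]-module to M₀[[ε]], where M₀ = M/εM. -/
open PowerSeries

/-- The model of `M₀[[ε]]` as the coefficient sequences `ℕ → M₀`. -/
abbrev FormalPS (M₀ : Type*) := ℕ → M₀

/-- Multiplication by `ε` on `M₀[[ε]]`: shift of coefficients by one. -/
def epsShift {M₀ : Type*} [AddCommGroup M₀] (m : FormalPS M₀) : FormalPS M₀ :=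
  fun n => if n < 1 then 0 else m (n - 1)

/-- The submodule `εM` of a `k[[ε]]`-module `M`, as a `k`-submodule. -/
noncomputable def epsSubmodule (k : Type*) [Field k] (M : Type*) [AddCommGroup M]
    [Module (PowerSeries k) M] [Module k M] [IsScalarTower k (PowerSeries k) M] :
    Submodule k M :=
  LinearMap.range ((LinearMap.lsmul (PowerSeries k) M (X : PowerSeries k)).restrictScalars k)

/-- A Hausdorff, complete, ε-torsion free `k[[ε]]`-module `M` is isomorphic as a
`k[[ε]]`-module to `M₀[[ε]]` where `M₀ = M/εM`: there is a `k`-linear isomorphism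
`M ≃ M₀[[ε]]` intertwining the action of `ε` (hence `k[[ε]]`-linear, both sides
being Hausdorff). -/
theorem hausdorff_complete_torsionFree_iso_formalPS
    {k : Type*} [Field k] {M : Type*} [AddCommGroup M]
    [Module (PowerSeries k) M] [Module k M] [IsScalarTower k (PowerSeries k) M]
    (hHausdorff : ∀ m : M, (∀ j : ℕ, ∃ y : M, m = (X : PowerSeries k) ^ j • y) → m = 0)
    (hTorsionFree : ∀ (j : ℕ) (m : M), (X : PowerSeries k) ^ j • m = 0 → m = 0)
    (hComplete : ∀ x : ℕ → M,
      (∀ n : ℕ, ∃ y : M, x (n + 1) - x n = (X : PowerSeries k) ^ (n + 1) • y) →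
      ∃ l : M, ∀ n : ℕ, ∃ y : M, l - x n = (X : PowerSeries k) ^ (n + 1) • y) :
    ∃ e : M ≃ₗ[k] FormalPS (M ⧸ epsSubmodule k M),
      ∀ m : M, e ((X : PowerSeries k) • m) = epsShift (e m) := by
  classical
  set L : M →ₗ[k] M :=
    (LinearMap.lsmul (PowerSeries k) M (X : PowerSeries k)).restrictScalars k with hLdef
  have hLapp : ∀ m : M, L m = (X : PowerSeries k) • m := fun m => rfl
  have hinj : Function.Injective L := by
    intro a b h
    rw [hLapp a, hLapp b] at h
    have h2 : (X : PowerSeries k) ^ 1 • (a - b) = 0 := by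
      rw [pow_one, smul_sub, h, sub_self]
    exact sub_eq_zero.mp (hTorsionFree 1 _ h2)
  have hrange : epsSubmodule k M = LinearMap.range L := rfl
  set π : M →ₗ[k] M ⧸ epsSubmodule k M := (epsSubmodule k M).mkQ with hπdef
  obtain ⟨s, hs⟩ := π.exists_rightInverse_of_surjective ((epsSubmodule k M).range_mkQ)
  have hsapp : ∀ x, π (s x) = x := fun x => LinearMap.ext_iff.mp hs x
  have hπX : ∀ y : M, π ((X : PowerSeries k) • y) = 0 := by
    intro y
    exact (Submodule.Quotient.mk_eq_zero _).mpr ⟨y, rfl⟩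
  have hmem : ∀ m : M, ((LinearMap.id - s ∘ₗ π : M →ₗ[k] M)) m ∈ LinearMap.range L := by
    intro m
    rw [← hrange]
    have : π (((LinearMap.id - s ∘ₗ π : M →ₗ[k] M)) m) = 0 := by
      simp [LinearMap.sub_apply, hsapp]
    rwa [hπdef, Submodule.mkQ_apply, Submodule.Quotient.mk_eq_zero] at this
  set E := LinearEquiv.ofInjective L hinj with hEdef
  set T : M →ₗ[k] M :=
    E.symm.toLinearMap ∘ₗ
      LinearMap.codRestrict (LinearMap.range L) ((LinearMap.id - s ∘ₗ π : M →ₗ[k] M)) hmem with hTdef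
  have hT : ∀ m : M, (X : PowerSeries k) • T m = m - s (π m) := by
    intro m
    have h1 : L (T m) = ((E (T m)) : M) := rfl
    have h2 : E (T m) = ⟨m - s (π m), hmem m⟩ := by
      rw [hTdef]
      exact E.apply_symm_apply _
    rw [← hLapp, h1, h2]
  have hTX : ∀ m : M, T ((X : PowerSeries k) • m) = m := by
    intro m
    apply hinj
    rw [hLapp, hLapp, hT, hπX, map_zero, sub_zero]
  set e : M →ₗ[k] (ℕ → M ⧸ epsSubmodule k M) :=
    LinearMap.pi (fun n => π ∘ₗ T ^ n) with hedef
  have heapp : ∀ (m : M) (n : ℕ), e m n = π ((T ^ n) m) := fun _ _ => rfl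
  -- key computation for surjectivity
  have key : ∀ (n : ℕ) (l : M) (b : ℕ → M ⧸ epsSubmodule k M) (y : M),
      l = (∑ j ∈ Finset.range (n + 1), (X : PowerSeries k) ^ j • s (b j)) +
        (X : PowerSeries k) ^ (n + 1) • y →
      π ((T ^ n) l) = b n := by
    intro n
    induction n with
    | zero =>
      intro l b y hl
      rw [zero_add] at hl
      simp only [Finset.sum_range_one, pow_zero, one_smul, pow_one] at hl
      rw [pow_zero, Module.End.one_apply, hl, map_add, hsapp, hπX, add_zero]
    | succ n ih =>
      intro l b y hl
      have hsum : l = s (b 0) + (X : PowerSeries k) •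
          ((∑ j ∈ Finset.range (n + 1), (X : PowerSeries k) ^ j • s (b (j + 1))) +
            (X : PowerSeries k) ^ (n + 1) • y) := by
        rw [hl, Finset.sum_range_succ']
        simp only [pow_zero, one_smul, smul_add, Finset.smul_sum, smul_smul, ← pow_succ']
        abel
      have hπl : π l = b 0 := by
        rw [hsum, map_add, hsapp, hπX, add_zero]
      have hTl : T l = (∑ j ∈ Finset.range (n + 1), (X : PowerSeries k) ^ j • s (b (j + 1))) +
          (X : PowerSeries k) ^ (n + 1) • y := by
        apply hinj
        rw [hLapp, hLapp, hT, hπl]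
        nth_rewrite 1 [hsum]
        abel
      rw [pow_succ, Module.End.mul_apply, hTl]
      exact ih _ (fun j => b (j + 1)) y rfl
  have einj : Function.Injective e := by
    rw [injective_iff_map_eq_zero]
    intro m hm
    have h0 : ∀ n : ℕ, π ((T ^ n) m) = 0 := fun n => by
      rw [← heapp, hm]; rfl
    have hrec : ∀ n : ℕ, m = (X : PowerSeries k) ^ n • ((T ^ n) m) := by
      intro n
      induction n with
      | zero => simp
      | succ n ihn =>
        have hstep : (X : PowerSeries k) • ((T ^ (n + 1)) m) = (T ^ n) m := by
          rw [pow_succ', Module.End.mul_apply, hT, h0, map_zero, sub_zero]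
        rw [pow_succ, mul_smul, hstep]
        exact ihn
    exact hHausdorff m (fun j => ⟨(T ^ j) m, hrec j⟩)
  have esurj : Function.Surjective e := by
    intro a
    obtain ⟨l, hl⟩ := hComplete
      (fun n => ∑ j ∈ Finset.range (n + 1), (X : PowerSeries k) ^ j • s (a j))
      (by
        intro n
        refine ⟨s (a (n + 1)), ?_⟩
        rw [Finset.sum_range_succ, add_sub_cancel_left])
    refine ⟨l, funext fun n => ?_⟩
    obtain ⟨y, hy⟩ := hl n
    have hleq : l = (∑ j ∈ Finset.range (n + 1), (X : PowerSeries k) ^ j • s (a j)) +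
        (X : PowerSeries k) ^ (n + 1) • y := sub_eq_iff_eq_add'.mp hy
    exact key n l a y hleq
  refine ⟨LinearEquiv.ofBijective e ⟨einj, esurj⟩, ?_⟩
  intro m
  funext n
  cases n with
  | zero =>
    show π ((T ^ 0) ((X : PowerSeries k) • m)) = epsShift (e m) 0
    simp [epsShift, hπX]
  | succ n =>
    show π ((T ^ (n + 1)) ((X : PowerSeries k) • m)) = epsShift (e m) (n + 1)
    have h1 : (T ^ (n + 1)) ((X : PowerSeries k) • m) = (T ^ n) m := by
      rw [pow_succ, Module.End.mul_apply, hTX]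
    rw [h1]
    show π ((T ^ n) m) = if n + 1 < 1 then 0 else e m (n + 1 - 1)
    rw [if_neg (by omega), Nat.add_sub_cancel, heapp]
end

section
/- Let Ω be a graded associative algebra over R[[ε]] of the form Ω₀[[ε]] with Ω₀ graded over R, and D = D₀ + εD₁ + ε²D₂ + … a degree-1 superderivation with D²a = [F,a]⋆, DF = 0, where F ∈ εΩ² (i.e. F ≡ 0 mod ε). Suppose the cohomology of D₀ on Ω₀ vanishes in degree 2 (every D₀-closed 2-form is D₀-exact). Then there exists γ ∈ εΩ¹ with F + Dγ + γ⋆γ = 0; i.e. D + [γ,·]⋆ is flat. -/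
open PowerSeries Finset

/-- An operator `D = D₀ + εD₁ + ε²D₂ + …` on `Ω = Ω₀[[ε]]`, given by the family
of its coefficients `Dseq j = Dⱼ`. -/
noncomputable def seriesOp {Ω₀ : Type*} [Ring Ω₀] (Dseq : ℕ → (Ω₀ →+ Ω₀)) :
    PowerSeries Ω₀ → PowerSeries Ω₀ :=
  fun f => PowerSeries.mk fun n => ∑ i ∈ range (n + 1), Dseq i (coeff (n - i) f)

/-!
The solution is built order by order in `ε`, the variable `X` of the power series ring.
If `γ ∈ εΩ¹` solves `F + Dγ + γ⋆γ ≡ 0 mod ε ^ (k + 1)`, the Bianchi identity `DR = [R, γ]⋆` for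
`R = F + Dγ + γ⋆γ` shows that the coefficient of `ε ^ (k + 1)` in `R` is a `D₀`-closed 2-form,
hence of the form `-D₀ y` with `y ∈ Ω₀¹`, and `γ + ε ^ (k + 1) y` solves the equation
modulo `ε ^ (k + 2)`. Successive solutions agree to increasing order, so their coefficientwise
limit solves it exactly.
-/

theorem exists_seq_of_forall_exists_succ {α : Type*} {P : ℕ → α → Prop}
    {R : ℕ → α → α → Prop} {a : α} (ha : P 0 a)
    (step : ∀ n x, P n x → ∃ y, P (n + 1) y ∧ R n x y) :
    ∃ f : ℕ → α, ∀ n, P n (f n) ∧ R n (f n) (f (n + 1)) := by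
  choose next hnext using step
  let f : (n : ℕ) → {x // P n x} :=
    fun n => Nat.rec ⟨a, ha⟩ (fun n x => ⟨next n x x.2, (hnext n x x.2).1⟩) n
  exact ⟨fun n => (f n).1, fun n => ⟨(f n).2, (hnext n _ (f n).2).2⟩⟩

namespace PowerSeries

variable {R : Type*} [Ring R]

theorem coeff_eq_zero_of_X_pow_dvd {k m : ℕ} {φ : R⟦X⟧} (h : X ^ k ∣ φ) (hm : m < k) :
    coeff m φ = 0 :=
  X_pow_dvd_iff.mp h m hm

theorem X_pow_succ_dvd_of_coeff_eq_zero {k : ℕ} {φ : R⟦X⟧} (h : X ^ k ∣ φ)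
    (hk : coeff k φ = 0) : X ^ (k + 1) ∣ φ :=
  X_pow_dvd_iff.mpr fun m hm => by
    rcases Nat.lt_succ_iff_lt_or_eq.mp hm with hm | rfl
    exacts [coeff_eq_zero_of_X_pow_dvd h hm, hk]

theorem X_pow_add_dvd_mul {i j : ℕ} {φ ψ : R⟦X⟧} (hφ : X ^ i ∣ φ) (hψ : X ^ j ∣ ψ) :
    X ^ (i + j) ∣ φ * ψ := by
  obtain ⟨φ', rfl⟩ := hφ
  obtain ⟨ψ', rfl⟩ := hψ
  exact ⟨φ' * ψ', by rw [pow_add, mul_assoc, ← mul_assoc φ', ← X_pow_mul]; noncomm_ring⟩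

theorem X_pow_dvd_mul_of_dvd_right {k : ℕ} {ψ : R⟦X⟧} (h : X ^ k ∣ ψ) (φ : R⟦X⟧) :
    X ^ k ∣ φ * ψ := by
  simpa using X_pow_add_dvd_mul (i := 0) (by simp) h

theorem eq_zero_of_forall_X_pow_succ_dvd {φ : R⟦X⟧} (h : ∀ k, X ^ (k + 1) ∣ φ) : φ = 0 :=
  ext fun m => coeff_eq_zero_of_X_pow_dvd (h m) m.lt_succ_self

theorem X_pow_succ_dvd_mk_coeff_diag_sub {f : ℕ → R⟦X⟧}
    (hf : ∀ n, X ^ (n + 1) ∣ f (n + 1) - f n) (n : ℕ) :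
    X ^ (n + 1) ∣ mk (fun m => coeff m (f m)) - f n := by
  have hstable : ∀ j m, m ≤ j → coeff m (f j) = coeff m (f m) := by
    intro j m hmj
    induction j, hmj using Nat.le_induction with
    | base => rfl
    | succ j hmj ih =>
      rw [← ih, ← sub_eq_zero, ← map_sub]
      exact coeff_eq_zero_of_X_pow_dvd (hf j) (Nat.lt_succ_of_le hmj)
  refine X_pow_dvd_iff.mpr fun m hm => ?_
  rw [map_sub, coeff_mk, hstable n m (Nat.le_of_lt_succ hm), sub_self]

end PowerSeries

section SeriesOp

variable {Ω₀ : Type*} [Ring Ω₀] (Dseq : ℕ → (Ω₀ →+ Ω₀))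

@[simp]
theorem coeff_seriesOp (f : PowerSeries Ω₀) (n : ℕ) :
    coeff n (seriesOp Dseq f) = ∑ i ∈ range (n + 1), Dseq i (coeff (n - i) f) :=
  coeff_mk _ _

@[simp]
theorem seriesOp_zero : seriesOp Dseq 0 = 0 := by
  ext n
  simp

theorem seriesOp_add (f g : PowerSeries Ω₀) :
    seriesOp Dseq (f + g) = seriesOp Dseq f + seriesOp Dseq g := by
  ext n
  simp [sum_add_distrib]

theorem seriesOp_sub (f g : PowerSeries Ω₀) :
    seriesOp Dseq (f - g) = seriesOp Dseq f - seriesOp Dseq g := by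
  ext n
  simp [sum_sub_distrib]

theorem seriesOp_X_mul (f : PowerSeries Ω₀) :
    seriesOp Dseq (X * f) = X * seriesOp Dseq f := by
  ext (_ | n)
  · simp
  · rw [coeff_seriesOp, sum_range_succ, Nat.sub_self, coeff_zero_X_mul, map_zero, add_zero,
      coeff_succ_X_mul, coeff_seriesOp]
    refine sum_congr rfl fun i hi => ?_
    rw [Nat.sub_add_comm (Nat.le_of_lt_succ (mem_range.mp hi)), coeff_succ_X_mul]

theorem seriesOp_X_pow_mul (k : ℕ) (f : PowerSeries Ω₀) :
    seriesOp Dseq (X ^ k * f) = X ^ k * seriesOp Dseq f := by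
  induction k with
  | zero => simp
  | succ k ih => rw [pow_succ', mul_assoc, seriesOp_X_mul, ih, mul_assoc]

theorem X_pow_dvd_seriesOp {k : ℕ} {f : PowerSeries Ω₀} (h : X ^ k ∣ f) :
    X ^ k ∣ seriesOp Dseq f := by
  obtain ⟨g, rfl⟩ := h
  exact ⟨seriesOp Dseq g, seriesOp_X_pow_mul Dseq k g⟩

theorem coeff_seriesOp_of_X_pow_dvd {k : ℕ} {f : PowerSeries Ω₀} (h : X ^ k ∣ f) :
    coeff k (seriesOp Dseq f) = Dseq 0 (coeff k f) := by
  obtain ⟨g, rfl⟩ := h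
  simp [seriesOp_X_pow_mul, coeff_X_pow_mul']

end SeriesOp

section Fedosov

variable {Ω₀ : Type*} [Ring Ω₀] (Gr : ℕ → AddSubgroup Ω₀) (Dseq : ℕ → (Ω₀ →+ Ω₀))

def gradedSeries (p : ℕ) : AddSubgroup (PowerSeries Ω₀) where
  carrier := {f | ∀ n, coeff n f ∈ Gr p}
  add_mem' hf hg n := by simpa using add_mem (hf n) (hg n)
  zero_mem' n := by simp
  neg_mem' hf n := by simpa using neg_mem (hf n)

variable {Gr}

theorem mul_mem_gradedSeries
    (hmul : ∀ (p q : ℕ) (x y : Ω₀), x ∈ Gr p → y ∈ Gr q → x * y ∈ Gr (p + q))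
    {p q : ℕ} {f g : PowerSeries Ω₀} (hf : f ∈ gradedSeries Gr p) (hg : g ∈ gradedSeries Gr q) :
    f * g ∈ gradedSeries Gr (p + q) := fun n => by
  rw [coeff_mul]
  exact sum_mem fun x _ => hmul p q _ _ (hf _) (hg _)

theorem seriesOp_mem_gradedSeries
    (hDdeg : ∀ (i p : ℕ) (x : Ω₀), x ∈ Gr p → Dseq i x ∈ Gr (p + 1))
    {p : ℕ} {f : PowerSeries Ω₀} (hf : f ∈ gradedSeries Gr p) :
    seriesOp Dseq f ∈ gradedSeries Gr (p + 1) := fun n => by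
  rw [coeff_seriesOp]
  exact sum_mem fun i _ => hDdeg i p _ (hf _)

/-- The curvature of the connection `D + [γ,·]⋆`. -/
noncomputable def twistedCurvature (F γ : PowerSeries Ω₀) : PowerSeries Ω₀ :=
  F + seriesOp Dseq γ + γ * γ

variable (F : PowerSeries Ω₀)

@[simp]
theorem twistedCurvature_zero : twistedCurvature Dseq F 0 = F := by
  simp [twistedCurvature]

variable (Gr) in
structure IsFlatteningModXPow (k : ℕ) (γ : PowerSeries Ω₀) : Prop where
  X_dvd : X ∣ γ
  mem_gradedSeries : γ ∈ gradedSeries Gr 1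
  X_pow_dvd_twistedCurvature : X ^ k ∣ twistedCurvature Dseq F γ

theorem isFlatteningModXPow_one_zero (hF0 : coeff 0 F = 0) :
    IsFlatteningModXPow Gr Dseq F 1 0 where
  X_dvd := dvd_zero X
  mem_gradedSeries := zero_mem _
  X_pow_dvd_twistedCurvature := by
    rwa [twistedCurvature_zero, pow_one, X_dvd_iff, ← coeff_zero_eq_constantCoeff_apply]

theorem twistedCurvature_mem_gradedSeries
    (hmul : ∀ (p q : ℕ) (x y : Ω₀), x ∈ Gr p → y ∈ Gr q → x * y ∈ Gr (p + q))
    (hDdeg : ∀ (i p : ℕ) (x : Ω₀), x ∈ Gr p → Dseq i x ∈ Gr (p + 1))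
    (hF2 : F ∈ gradedSeries Gr 2) {γ : PowerSeries Ω₀} (hγ : γ ∈ gradedSeries Gr 1) :
    twistedCurvature Dseq F γ ∈ gradedSeries Gr 2 :=
  add_mem (add_mem hF2 (seriesOp_mem_gradedSeries Dseq hDdeg hγ))
    (mul_mem_gradedSeries hmul hγ hγ)

theorem X_pow_dvd_twistedCurvature_sub {k : ℕ} {γ γ' : PowerSeries Ω₀} (h : X ^ k ∣ γ - γ') :
    X ^ k ∣ twistedCurvature Dseq F γ - twistedCurvature Dseq F γ' := by
  have hdiff : twistedCurvature Dseq F γ - twistedCurvature Dseq F γ'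
      = seriesOp Dseq (γ - γ') + (γ - γ') * γ + γ' * (γ - γ') := by
    simp only [twistedCurvature, seriesOp_sub]
    noncomm_ring
  rw [hdiff]
  exact dvd_add (dvd_add (X_pow_dvd_seriesOp Dseq h) (h.mul_right γ))
    (X_pow_dvd_mul_of_dvd_right h γ')

theorem seriesOp_twistedCurvature
    (hcurv : ∀ x : PowerSeries Ω₀, seriesOp Dseq (seriesOp Dseq x) = F * x - x * F)
    (hBianchi : seriesOp Dseq F = 0) {γ : PowerSeries Ω₀}
    (hLeib : seriesOp Dseq (γ * γ) = seriesOp Dseq γ * γ - γ * seriesOp Dseq γ) :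
    seriesOp Dseq (twistedCurvature Dseq F γ)
      = twistedCurvature Dseq F γ * γ - γ * twistedCurvature Dseq F γ := by
  simp only [twistedCurvature, seriesOp_add, hBianchi, hcurv, hLeib]
  noncomm_ring

theorem dseq_zero_coeff_eq_zero_of_seriesOp_eq_commutator {k : ℕ} {R γ : PowerSeries Ω₀}
    (hR : X ^ k ∣ R) (hγ : X ∣ γ) (hD : seriesOp Dseq R = R * γ - γ * R) :
    Dseq 0 (coeff k R) = 0 := by
  have hγ' : X ^ 1 ∣ γ := by rwa [pow_one]
  have hcomm : X ^ (k + 1) ∣ R * γ - γ * R :=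
    dvd_sub (X_pow_add_dvd_mul hR hγ') (add_comm 1 k ▸ X_pow_add_dvd_mul hγ' hR)
  rw [← coeff_seriesOp_of_X_pow_dvd Dseq hR, hD]
  exact coeff_eq_zero_of_X_pow_dvd hcomm k.lt_succ_self

theorem IsFlatteningModXPow.exists_succ
    (hmul : ∀ (p q : ℕ) (x y : Ω₀), x ∈ Gr p → y ∈ Gr q → x * y ∈ Gr (p + q))
    (hDdeg : ∀ (i p : ℕ) (x : Ω₀), x ∈ Gr p → Dseq i x ∈ Gr (p + 1))
    (hF2 : F ∈ gradedSeries Gr 2)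
    (hH2 : ∀ x : Ω₀, x ∈ Gr 2 → Dseq 0 x = 0 → ∃ y ∈ Gr 1, Dseq 0 y = x)
    {k : ℕ} {γ : PowerSeries Ω₀} (hγ : IsFlatteningModXPow Gr Dseq F (k + 1) γ)
    (hBianchi : seriesOp Dseq (twistedCurvature Dseq F γ)
      = twistedCurvature Dseq F γ * γ - γ * twistedCurvature Dseq F γ) :
    ∃ γ', IsFlatteningModXPow Gr Dseq F (k + 2) γ' ∧ X ^ (k + 1) ∣ γ' - γ := by
  obtain ⟨hγ0, hγ1, hk⟩ := hγ
  set c := coeff (k + 1) (twistedCurvature Dseq F γ)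
  have hc2 : c ∈ Gr 2 := twistedCurvature_mem_gradedSeries Dseq F hmul hDdeg hF2 hγ1 (k + 1)
  have hc0 : Dseq 0 c = 0 :=
    dseq_zero_coeff_eq_zero_of_seriesOp_eq_commutator Dseq hk hγ0 hBianchi
  obtain ⟨y, hy1, hy⟩ := hH2 (-c) (neg_mem hc2) (by rw [map_neg, hc0, neg_zero])
  set δ : PowerSeries Ω₀ := X ^ (k + 1) * C y
  have hδ : X ^ (k + 1) ∣ δ := dvd_mul_right _ _
  have hδ1 : δ ∈ gradedSeries Gr 1 := fun n => by
    rw [coeff_X_pow_mul', coeff_C]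
    split_ifs <;> simp [hy1]
  have hγ0' : X ^ 1 ∣ γ := by rwa [pow_one]
  have hlinear : X ^ (k + 2) ∣ twistedCurvature Dseq F γ + seriesOp Dseq δ := by
    refine X_pow_succ_dvd_of_coeff_eq_zero (dvd_add hk (X_pow_dvd_seriesOp Dseq hδ)) ?_
    rw [map_add, coeff_seriesOp_of_X_pow_dvd Dseq hδ]
    simp [δ, hy, c]
  have hquadratic : X ^ (k + 2) ∣ γ * δ + δ * γ + δ * δ := by
    refine dvd_add (dvd_add ?_ (X_pow_add_dvd_mul (i := k + 1) hδ hγ0')) ?_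
    · exact add_comm 1 (k + 1) ▸ X_pow_add_dvd_mul hγ0' hδ
    · exact (pow_dvd_pow X (by omega)).trans (X_pow_add_dvd_mul hδ hδ)
  refine ⟨γ + δ, ⟨dvd_add hγ0 (dvd_mul_of_dvd_left (dvd_pow_self X k.succ_ne_zero) _),
    add_mem hγ1 hδ1, ?_⟩, by simpa using hδ⟩
  have hexpand : twistedCurvature Dseq F (γ + δ)
      = (twistedCurvature Dseq F γ + seriesOp Dseq δ) + (γ * δ + δ * γ + δ * δ) := by
    simp only [twistedCurvature, seriesOp_add]
    noncomm_ring
  rw [hexpand]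
  exact dvd_add hlinear hquadratic

end Fedosov

/-- Lemma 4.5 of Cattaneo–Felder–Tomassini, abstractly: `Ω₀` a graded associative
algebra (with grading `Gr` by form degree), `Ω = Ω₀[[ε]]`, and
`D = D₀ + εD₁ + …` a Fedosov connection: a degree-1 superderivation with
curvature `D²=[F,·]⋆` and `DF = 0`, whose Weyl curvature `F` lies in `εΩ²`.
If every `D₀`-closed 2-form is `D₀`-exact, then there is `γ ∈ εΩ¹` with
`F + Dγ + γ⋆γ = 0`, i.e. `D + [γ,·]⋆` is flat. -/
theorem fedosov_flattening
    {Ω₀ : Type*} [Ring Ω₀] (Gr : ℕ → AddSubgroup Ω₀)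
    (hmul : ∀ (p q : ℕ) (x y : Ω₀), x ∈ Gr p → y ∈ Gr q → x * y ∈ Gr (p + q))
    (Dseq : ℕ → (Ω₀ →+ Ω₀))
    (hDdeg : ∀ (i p : ℕ) (x : Ω₀), x ∈ Gr p → Dseq i x ∈ Gr (p + 1))
    (hLeib : ∀ (p : ℕ) (x y : PowerSeries Ω₀), (∀ n, coeff n x ∈ Gr p) →
      seriesOp Dseq (x * y)
        = seriesOp Dseq x * y + ((-1 : ℤ) ^ p) • (x * seriesOp Dseq y))
    (F : PowerSeries Ω₀)
    (hF2 : ∀ n, coeff n F ∈ Gr 2)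
    (hF0 : coeff 0 F = 0)
    (hcurv : ∀ x : PowerSeries Ω₀,
      seriesOp Dseq (seriesOp Dseq x) = F * x - x * F)
    (hBianchi : seriesOp Dseq F = 0)
    (hH2 : ∀ x : Ω₀, x ∈ Gr 2 → Dseq 0 x = 0 → ∃ y ∈ Gr 1, Dseq 0 y = x) :
    ∃ γ : PowerSeries Ω₀, coeff 0 γ = 0 ∧ (∀ n, coeff n γ ∈ Gr 1) ∧
      F + seriesOp Dseq γ + γ * γ = 0 := by
  obtain ⟨γs, hγs⟩ := exists_seq_of_forall_exists_succ
    (P := fun n => IsFlatteningModXPow Gr Dseq F (n + 1))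
    (R := fun n γ γ' => X ^ (n + 1) ∣ γ' - γ)
    (isFlatteningModXPow_one_zero Dseq F hF0)
    fun n γ hγ =>
      have hLeibγ := by simpa [sub_eq_add_neg] using hLeib 1 γ γ hγ.mem_gradedSeries
      hγ.exists_succ Dseq F hmul hDdeg hF2 hH2
        (seriesOp_twistedCurvature Dseq F hcurv hBianchi hLeibγ)
  have hflat n := (hγs n).1
  set γ := mk fun m => coeff m (γs m)
  have hlim n : X ^ (n + 1) ∣ γ - γs n :=
    X_pow_succ_dvd_mk_coeff_diag_sub (fun n => (hγs n).2) n
  refine ⟨γ, by simpa [γ, X_dvd_iff] using (hflat 0).X_dvd,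
    fun m => by simpa [γ] using (hflat m).mem_gradedSeries m,
    eq_zero_of_forall_X_pow_succ_dvd fun n => ?_⟩
  simpa [twistedCurvature] using dvd_add (X_pow_dvd_twistedCurvature_sub Dseq F (hlim n))
    (hflat n).X_pow_dvd_twistedCurvature
end

section
/- Let (C, D₀) and (C, D) be two flat differential complexes on the same R[[ε]]-module C = C₀[[ε]], with D = D₀ + εD₁ + …, where each Dⱼ (j ≥ 1) lies in a space B of operators such that H¹(B, D₀) = 0 (every operator-valued 1-cocycle for D₀ is a coboundary). Then there exists ρ = Id + ερ₁ + ε²ρ₂ + … with ρⱼ ∈ B⁰ such that D∘ρ = ρ∘D₀; in particular ρ is invertible and restricts to an isomorphism of R[[ε]]-modules H⁰(C₀, D₀)[[ε]] → H⁰(C, D). -/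
/-!
Work in the ring `End(C₀)⟦ε⟧`, which acts on `C₀[[ε]]` through `seqConv`, and put
`E(ρ) = D ρ - ρ D₀`. Flatness gives `D E(ρ) + E(ρ) D₀ = D² ρ - ρ D₀² = 0`, so if `E(ρ)` vanishes
below order `n`, its order-`n` coefficient is a `D₀`-cocycle. That coefficient is
`D₀ ρₙ - ρₙ D₀ + Φ`, where `Φ` is the same coefficient computed with `ρ` truncated below order `n`;
`Φ` lies in `B` and is again a cocycle, so `Φ = D₀ ψ - ψ D₀` with `ψ ∈ B`, and `ρₙ = -ψ` kills it.
As `ρ₀ = 1`, `ρ` is a unit of the power series ring and acts bijectively; intertwining `D₀` with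
`D`, it maps the `D₀`-cocycles onto the `D`-cocycles.
-/

open Finset

/-- The operator `T = T₀ + εT₁ + …` on `C = C₀[[ε]]` determined by a family of
operators `Tⱼ` on `C₀` (elements of `C₀[[ε]]` are encoded as coefficient
sequences `ℕ → C₀`). -/
def seqConv {C₀ : Type*} [AddCommGroup C₀] [Module ℝ C₀]
    (T : ℕ → (C₀ →ₗ[ℝ] C₀)) (f : ℕ → C₀) : ℕ → C₀ :=
  fun n => ∑ i ∈ range (n + 1), T i (f (n - i))

open PowerSeries

namespace PowerSeries

variable {R : Type*} [Semiring R]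

lemma coeff_mul_congr_right {φ ψ ψ' : R⟦X⟧} {n : ℕ} (h : ∀ k ≤ n, coeff k ψ = coeff k ψ') :
    coeff n (φ * ψ) = coeff n (φ * ψ') := by
  simp only [coeff_mul]
  refine sum_congr rfl fun p hp => ?_
  rw [h p.2 (HasAntidiagonal.antidiagonal.snd_le hp)]

lemma coeff_mul_congr_left {φ φ' ψ : R⟦X⟧} {n : ℕ} (h : ∀ k ≤ n, coeff k φ = coeff k φ') :
    coeff n (φ * ψ) = coeff n (φ' * ψ) := by
  simp only [coeff_mul]
  refine sum_congr rfl fun p hp => ?_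
  rw [h p.1 (HasAntidiagonal.antidiagonal.fst_le hp)]

lemma coeff_mul_monomial_self (φ : R⟦X⟧) (n : ℕ) (a : R) :
    coeff n (φ * monomial n a) = constantCoeff φ * a := by
  rw [monomial_eq_C_mul_X_pow, ← mul_assoc, coeff_mul_X_pow', if_pos le_rfl, Nat.sub_self,
    coeff_mul_C, coeff_zero_eq_constantCoeff_apply]

lemma coeff_mul_eq_constantCoeff_mul {φ ψ : R⟦X⟧} {n : ℕ} (h : ∀ k < n, coeff k ψ = 0) :
    coeff n (φ * ψ) = constantCoeff φ * coeff n ψ := by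
  rw [coeff_mul, sum_eq_single (0, n)]
  · simp
  · rintro ⟨i, j⟩ hij hne
    rw [HasAntidiagonal.mem_antidiagonal] at hij
    rw [h j (by grind), mul_zero]
  · simp

end PowerSeries

lemma Function.Semiconj.bijOn_preimage_singleton {α β : Type*} {e : α → β} {ga : α → α}
    {gb : β → β} (h : Function.Semiconj e ga gb) (he : Function.Bijective e) (a : α) :
    Set.BijOn e (ga ⁻¹' {a}) (gb ⁻¹' {e a}) := by
  refine ⟨fun x hx => ?_, he.injective.injOn, fun y hy => ?_⟩
  · simp_all [← h x]
  · obtain ⟨x, rfl⟩ := he.surjective y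
    exact ⟨x, he.injective ((h x).trans hy), rfl⟩

section IntertwiningDefect

variable {R : Type*} [Ring R]

noncomputable def intertwiningDefect (D ρ : R⟦X⟧) : R⟦X⟧ := D * ρ - ρ * C (constantCoeff D)

lemma coeff_intertwiningDefect_congr (D : R⟦X⟧) {ρ ρ' : R⟦X⟧} {n : ℕ}
    (h : ∀ k ≤ n, coeff k ρ = coeff k ρ') :
    coeff n (intertwiningDefect D ρ) = coeff n (intertwiningDefect D ρ') := by
  simp only [intertwiningDefect, map_sub, coeff_mul_congr_right h, coeff_mul_congr_left h]

lemma coeff_intertwiningDefect_eq_add (D : R⟦X⟧) {ρ T : R⟦X⟧} {n : ℕ}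
    (hT : ∀ k < n, coeff k T = coeff k ρ) (hTn : coeff n T = 0) :
    coeff n (intertwiningDefect D ρ) =
      constantCoeff D * coeff n ρ - coeff n ρ * constantCoeff D
        + coeff n (intertwiningDefect D T) := by
  have hsplit : ∀ k ≤ n, coeff k ρ = coeff k (T + monomial n (coeff n ρ)) := by
    intro k hk
    rcases hk.lt_or_eq with hk | rfl
    · simp [hT k hk, coeff_monomial, hk.ne]
    · simp [hTn]
  rw [coeff_intertwiningDefect_congr D hsplit]
  simp only [intertwiningDefect, mul_add, add_mul, map_add, map_sub, coeff_mul_monomial_self,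
    coeff_mul_C, coeff_monomial_same]
  abel

lemma coeff_intertwiningDefect_mem {S : Type*} [SetLike S R] [NonUnitalSubringClass S R] (B : S)
    {D T : R⟦X⟧} {n : ℕ} (hD : ∀ i, 1 ≤ i → coeff i D ∈ B) (hT₀ : constantCoeff T = 1)
    (hT : ∀ j, 1 ≤ j → coeff j T ∈ B) (hTn : coeff n T = 0) :
    coeff n (intertwiningDefect D T) ∈ B := by
  rw [intertwiningDefect, map_sub, coeff_mul_C, hTn, zero_mul, sub_zero, coeff_mul]
  refine sum_mem fun p hp => ?_
  rw [HasAntidiagonal.mem_antidiagonal] at hp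
  rcases Nat.eq_zero_or_pos p.1 with h₁ | h₁
  · rw [show p.2 = n by omega, hTn, mul_zero]
    exact zero_mem B
  rcases Nat.eq_zero_or_pos p.2 with h₂ | h₂
  · rw [h₂, coeff_zero_eq_constantCoeff_apply, hT₀, mul_one]
    exact hD _ h₁
  · exact mul_mem (hD _ h₁) (hT _ h₂)

lemma intertwiningDefect_cocycle {D : R⟦X⟧} (hDD : D * D = 0) (T : R⟦X⟧) :
    D * intertwiningDefect D T + intertwiningDefect D T * C (constantCoeff D) = 0 := by
  have hd : C (constantCoeff D) * C (constantCoeff D) = 0 := by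
    rw [← map_mul, ← map_mul, hDD, map_zero, map_zero]
  simp only [intertwiningDefect, mul_sub, sub_mul, ← mul_assoc, hDD, zero_mul]
  rw [mul_assoc T, hd, mul_zero]
  abel

lemma coeff_intertwiningDefect_isCocycle {D T : R⟦X⟧} (hDD : D * D = 0) {n : ℕ}
    (h : ∀ k < n, coeff k (intertwiningDefect D T) = 0) :
    constantCoeff D * coeff n (intertwiningDefect D T)
      + coeff n (intertwiningDefect D T) * constantCoeff D = 0 := by
  rw [← coeff_mul_eq_constantCoeff_mul h, ← coeff_mul_C, ← map_add,
    intertwiningDefect_cocycle hDD, map_zero]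

end IntertwiningDefect

section Intertwiner

variable {R S : Type*} [Ring R] [SetLike S R]

def FirstCohomologyVanishes (B : S) (d : R) : Prop :=
  ∀ Φ ∈ B, d * Φ + Φ * d = 0 → ∃ ψ ∈ B, Φ = d * ψ - ψ * d

open Classical in
noncomputable def commutatorPreimage (B : S) (d Φ : R) : R :=
  if h : ∃ ψ ∈ B, Φ = d * ψ - ψ * d then h.choose else 0

lemma commutatorPreimage_spec {B : S} {d Φ : R} (h : ∃ ψ ∈ B, Φ = d * ψ - ψ * d) :
    commutatorPreimage B d Φ ∈ B ∧
      Φ = d * commutatorPreimage B d Φ - commutatorPreimage B d Φ * d := by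
  rw [commutatorPreimage, dif_pos h]
  exact h.choose_spec

noncomputable def intertwinerCoeff (B : S) (D : R⟦X⟧) (n : ℕ) : R :=
  if n = 0 then 1 else
    -commutatorPreimage B (constantCoeff D)
      (coeff n (intertwiningDefect D (mk fun k => if _ : k < n then intertwinerCoeff B D k else 0)))

noncomputable def intertwiner (B : S) (D : R⟦X⟧) : R⟦X⟧ :=
  mk (intertwinerCoeff B D)

lemma constantCoeff_intertwiner (B : S) (D : R⟦X⟧) : constantCoeff (intertwiner B D) = 1 := by
  rw [← coeff_zero_eq_constantCoeff_apply, intertwiner, coeff_mk, intertwinerCoeff, if_pos rfl]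

lemma coeff_intertwiner_of_pos (B : S) (D : R⟦X⟧) {n : ℕ} (hn : 0 < n) :
    coeff n (intertwiner B D) = -commutatorPreimage B (constantCoeff D) (coeff n
      (intertwiningDefect D (mk fun k => if k < n then coeff k (intertwiner B D) else 0))) := by
  rw [intertwiner, coeff_mk, intertwinerCoeff, if_neg hn.ne']
  simp

variable [NonUnitalSubringClass S R] {B : S} {D : R⟦X⟧}

lemma coeff_intertwiner_mem_and_coeff_intertwiningDefect_eq_zero (hDD : D * D = 0)
    (hD : ∀ i, 1 ≤ i → coeff i D ∈ B) (hH1 : FirstCohomologyVanishes B (constantCoeff D))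
    (n : ℕ) :
    (1 ≤ n → coeff n (intertwiner B D) ∈ B) ∧
      coeff n (intertwiningDefect D (intertwiner B D)) = 0 := by
  induction n using Nat.strong_induction_on with
  | _ n ih =>
  set ρ := intertwiner B D
  set T : R⟦X⟧ := mk fun k => if k < n then coeff k ρ else 0
  have hTρ : ∀ k < n, coeff k T = coeff k ρ := fun k hk => by simp [T, hk]
  have hdefect := coeff_intertwiningDefect_eq_add D hTρ (by simp [T])
  rcases Nat.eq_zero_or_pos n with rfl | hn
  · have hT : T = 0 := by ext k; simp [T]
    rw [hdefect, hT, coeff_zero_eq_constantCoeff_apply, constantCoeff_intertwiner]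
    simp [intertwiningDefect]
  set Φ := coeff n (intertwiningDefect D T)
  have hΦB : Φ ∈ B := by
    refine coeff_intertwiningDefect_mem B hD ?_ (fun j hj => ?_) (by simp [T])
    · simpa [T, hn] using constantCoeff_intertwiner B D
    by_cases hjn : j < n
    · simpa [T, hjn] using (ih j hjn).1 hj
    · simp [T, hjn]
  have hΦ : constantCoeff D * Φ + Φ * constantCoeff D = 0 := by
    refine coeff_intertwiningDefect_isCocycle hDD fun k hk => ?_
    rw [coeff_intertwiningDefect_congr D fun j hj => hTρ j (by omega)]
    exact (ih k hk).2
  obtain ⟨hψB, hψ⟩ := commutatorPreimage_spec (hH1 Φ hΦB hΦ)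
  set ψ := commutatorPreimage B (constantCoeff D) Φ
  have hρn : coeff n ρ = -ψ := coeff_intertwiner_of_pos B D hn
  refine ⟨fun _ => hρn ▸ neg_mem hψB, ?_⟩
  rw [hdefect, hρn, hψ]
  noncomm_ring

theorem coeff_intertwiner_mem (hDD : D * D = 0) (hD : ∀ i, 1 ≤ i → coeff i D ∈ B)
    (hH1 : FirstCohomologyVanishes B (constantCoeff D)) {j : ℕ} (hj : 1 ≤ j) :
    coeff j (intertwiner B D) ∈ B :=
  (coeff_intertwiner_mem_and_coeff_intertwiningDefect_eq_zero hDD hD hH1 j).1 hj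

theorem mul_intertwiner (hDD : D * D = 0) (hD : ∀ i, 1 ≤ i → coeff i D ∈ B)
    (hH1 : FirstCohomologyVanishes B (constantCoeff D)) :
    D * intertwiner B D = intertwiner B D * C (constantCoeff D) := by
  have : intertwiningDefect D (intertwiner B D) = 0 := ext fun n => by
    simpa using (coeff_intertwiner_mem_and_coeff_intertwiningDefect_eq_zero hDD hD hH1 n).2
  exact sub_eq_zero.mp this

end Intertwiner

section SeqConv

variable {C₀ : Type*} [AddCommGroup C₀] [Module ℝ C₀]

lemma seqConv_apply_eq_sum_antidiagonal (T : ℕ → (C₀ →ₗ[ℝ] C₀)) (f : ℕ → C₀) (n : ℕ) :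
    seqConv T f n = ∑ p ∈ antidiagonal n, T p.1 (f p.2) :=
  (Nat.sum_antidiagonal_eq_sum_range_succ_mk (fun p => T p.1 (f p.2)) n).symm

lemma seqConv_single (T : ℕ → (C₀ →ₗ[ℝ] C₀)) (x : C₀) (n : ℕ) :
    seqConv T (Pi.single 0 x) n = T n x := by
  rw [seqConv_apply_eq_sum_antidiagonal, sum_eq_single (n, 0)] <;> aesop

lemma seqConv_mul (φ ψ : PowerSeries (Module.End ℝ C₀)) (f : ℕ → C₀) :
    seqConv (coeff · (φ * ψ)) f = seqConv (coeff · φ) (seqConv (coeff · ψ) f) := by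
  ext n
  simp only [seqConv_apply_eq_sum_antidiagonal, coeff_mul, LinearMap.sum_apply, map_sum,
    Module.End.mul_apply, sum_sigma']
  apply sum_nbij' (fun ⟨⟨_i, j⟩, ⟨k, l⟩⟩ ↦ ⟨(k, l + j), (l, j)⟩)
    (fun ⟨⟨i, _j⟩, ⟨k, l⟩⟩ ↦ ⟨(i + k, l), (i, k)⟩) <;> aesop (add simp [add_assoc])

lemma seqConv_C (a : Module.End ℝ C₀) (f : ℕ → C₀) :
    seqConv (coeff · (C a)) f = fun n => a (f n) := by
  ext n
  simp [seqConv, sum_range_succ', coeff_C]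

lemma seqConv_one (f : ℕ → C₀) : seqConv (coeff · (1 : PowerSeries (Module.End ℝ C₀))) f = f := by
  simpa using seqConv_C 1 f

lemma eq_zero_of_seqConv_eq_zero {φ : PowerSeries (Module.End ℝ C₀)}
    (h : ∀ f, seqConv (coeff · φ) f = 0) : φ = 0 := by
  ext n x
  simpa [seqConv_single] using congrFun (h (Pi.single 0 x)) n

lemma seqConv_bijective_of_isUnit {φ : PowerSeries (Module.End ℝ C₀)} (hφ : IsUnit φ) :
    Function.Bijective (seqConv (coeff · φ)) := by
  obtain ⟨u, rfl⟩ := hφ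
  refine Function.bijective_iff_has_inverse.mpr ⟨seqConv (coeff · ↑u⁻¹), fun f => ?_, fun f => ?_⟩
  · rw [← seqConv_mul, Units.inv_mul, seqConv_one]
  · rw [← seqConv_mul, Units.mul_inv, seqConv_one]

end SeqConv

theorem intertwiner_exists_general
    {C₀ : Type*} [AddCommGroup C₀] [Module ℝ C₀]
    (B : Submodule ℝ (C₀ →ₗ[ℝ] C₀))
    (hBcomp : ∀ Φ ∈ B, ∀ Ψ ∈ B, Φ ∘ₗ Ψ ∈ B)
    (Dseq : ℕ → (C₀ →ₗ[ℝ] C₀))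
    (hflat : ∀ f : ℕ → C₀, seqConv Dseq (seqConv Dseq f) = 0)
    (hDB : ∀ j : ℕ, 1 ≤ j → Dseq j ∈ B)
    (hH1 : ∀ Φ ∈ B, Dseq 0 ∘ₗ Φ + Φ ∘ₗ Dseq 0 = 0 →
      ∃ ψ ∈ B, Φ = Dseq 0 ∘ₗ ψ - ψ ∘ₗ Dseq 0) :
    ∃ ρ : ℕ → (C₀ →ₗ[ℝ] C₀),
      ρ 0 = LinearMap.id ∧
      (∀ j : ℕ, 1 ≤ j → ρ j ∈ B) ∧
      (∀ f : ℕ → C₀, seqConv Dseq (seqConv ρ f)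
          = seqConv ρ (fun n => Dseq 0 (f n))) ∧
      Function.Bijective (seqConv ρ) ∧
      Set.BijOn (seqConv ρ) {f | ∀ n, Dseq 0 (f n) = 0}
        {f | seqConv Dseq f = 0} := by
  let B' := B.toNonUnitalSubalgebra fun Φ Ψ hΦ hΨ => hBcomp Φ hΦ Ψ hΨ
  let D : PowerSeries (Module.End ℝ C₀) := mk Dseq
  have hDD : D * D = 0 := eq_zero_of_seqConv_eq_zero fun f => by
    simpa [D, seqConv_mul] using hflat f
  have hD : ∀ i, 1 ≤ i → coeff i D ∈ B' := fun i hi => by simpa [D, B'] using hDB i hi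
  let ρ := intertwiner B' D
  have hρ₀ : constantCoeff ρ = 1 := constantCoeff_intertwiner B' D
  have hinter : ∀ f, seqConv Dseq (seqConv (coeff · ρ) f)
      = seqConv (coeff · ρ) (fun n => Dseq 0 (f n)) := fun f => by
    have h := congrArg (fun φ => seqConv (coeff · φ) f) (mul_intertwiner hDD hD hH1)
    simp only [seqConv_mul, seqConv_C] at h
    simpa only [D, coeff_mk, constantCoeff_mk] using h
  have hbij : Function.Bijective (seqConv (coeff · ρ)) :=
    seqConv_bijective_of_isUnit (isUnit_iff_constantCoeff.mpr (hρ₀ ▸ isUnit_one))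
  refine ⟨(coeff · ρ), (coeff_zero_eq_constantCoeff_apply ρ).trans hρ₀,
    fun j hj => coeff_intertwiner_mem hDD hD hH1 hj, hinter, hbij, ?_⟩
  convert Function.Semiconj.bijOn_preimage_singleton (fun f => (hinter f).symm) hbij 0
    using 1 <;> ext f <;> simp [funext_iff, seqConv]

/-- Lemma 4.6 of Cattaneo–Felder–Tomassini, abstractly.  `D₀` and
`D = D₀ + εD₁ + …` are flat differentials on `C = C₀[[ε]]`, with each `Dⱼ`
(`j ≥ 1`) in a composition-closed subcomplex `B` of operators whose first
cohomology vanishes.  Then there is `ρ = Id + ερ₁ + ε²ρ₂ + …` with `ρⱼ ∈ B`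
and `D∘ρ = ρ∘D₀`; in particular `ρ` is invertible and restricts to an
isomorphism `H⁰(C₀,D₀)[[ε]] → H⁰(C,D)` of `ℝ[[ε]]`-modules. -/
theorem intertwiner_exists
    {C₀ : Type*} [AddCommGroup C₀] [Module ℝ C₀]
    (B : Submodule ℝ (C₀ →ₗ[ℝ] C₀))
    (hBcomp : ∀ Φ ∈ B, ∀ Ψ ∈ B, Φ ∘ₗ Ψ ∈ B)
    (Dseq : ℕ → (C₀ →ₗ[ℝ] C₀))
    (hBsub : ∀ Φ ∈ B, Dseq 0 ∘ₗ Φ - Φ ∘ₗ Dseq 0 ∈ B)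
    (hflat0 : Dseq 0 ∘ₗ Dseq 0 = 0)
    (hflat : ∀ f : ℕ → C₀, seqConv Dseq (seqConv Dseq f) = 0)
    (hDB : ∀ j : ℕ, 1 ≤ j → Dseq j ∈ B)
    (hH1 : ∀ Φ ∈ B, Dseq 0 ∘ₗ Φ + Φ ∘ₗ Dseq 0 = 0 →
      ∃ ψ ∈ B, Φ = Dseq 0 ∘ₗ ψ - ψ ∘ₗ Dseq 0) :
    ∃ ρ : ℕ → (C₀ →ₗ[ℝ] C₀),
      ρ 0 = LinearMap.id ∧
      (∀ j : ℕ, 1 ≤ j → ρ j ∈ B) ∧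
      (∀ f : ℕ → C₀, seqConv Dseq (seqConv ρ f)
          = seqConv ρ (fun n => Dseq 0 (f n))) ∧
      Function.Bijective (seqConv ρ) ∧
      Set.BijOn (seqConv ρ) {f | ∀ n, Dseq 0 (f n) = 0}
        {f | seqConv Dseq f = 0} :=
  intertwiner_exists_general B hBcomp Dseq hflat hDB hH1
end
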